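/- For every commutative ring A, every family of weights R : ℤ → A, every integer n and all natural numbers j ≥ 1 and k ≥ 0, the following inversion relation holds: Σ_{i=0}^{j} (−1)^{j−i} · Π_{n−j,n+j−1}(j−i) · (Z_{n−k,n+k−1}(2i−1) − R_{n−k−1}R_{n+k+1}·Z_{n−k−2,n+k+1}(2i−1)) = δ_{j,k}, where δ_{j,k} is 1 if j = k and 0 otherwise. -/

import Mathlib

open Finset

variable {A : Type*} [CommRing A]

/-- End height of a walk starting at a given height, with steps given by a list of
Booleans (`true` = ascending step `+1`, `false` = descending step `-1`). -/
def walkEnd : ℤ → List Bool → ℤ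
  | a, [] => a
  | a, true :: s => walkEnd (a + 1) s
  | a, false :: s => walkEnd (a - 1) s

/-- Weight of a walk: the product of `R h` over all descending steps `h → h - 1`. -/
def walkWeight (R : ℤ → A) : ℤ → List Bool → A
  | _, [] => 1
  | a, true :: s => walkWeight R (a + 1) s
  | a, false :: s => R a * walkWeight R (a - 1) s

/-- Whether every height visited by the walk (including the first and last) is `≥ c`. -/
def walkAbove (c : ℤ) : ℤ → List Bool → Bool
  | a, [] => decide (c ≤ a)
  | a, true :: s => decide (c ≤ a) && walkAbove c (a + 1) s
  | a, false :: s => decide (c ≤ a) && walkAbove c (a - 1) s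

/-- `Zw R a b k`: the generating function of walks of length `k` from height `a` to
height `b`, each walk weighted by `R h` per descending step from height `h`. -/
def Zw (R : ℤ → A) (a b : ℤ) (k : ℕ) : A :=
  ∑ s : Fin k → Bool,
    if walkEnd a (List.ofFn s) = b then walkWeight R a (List.ofFn s) else 0

/-- `Zwp R a b k`: the same generating function, restricted to walks staying at
heights `≥ a` ("positive walks"). -/
def Zwp (R : ℤ → A) (a b : ℤ) (k : ℕ) : A :=
  ∑ s : Fin k → Bool,
    if walkEnd a (List.ofFn s) = b ∧ walkAbove a a (List.ofFn s) = true then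
      walkWeight R a (List.ofFn s)
    else 0

/-- `Pdim R a b k`: hard-dimer partition function on the segment `[a,b]`: the sum over
`k`-element subsets `S` of `{a+1, …, b}` with no two consecutive elements of
`∏ i in S, R i` (a dimer on `[i-1,i]` carries weight `R i`). -/
noncomputable def Pdim (R : ℤ → A) (a b : ℤ) (k : ℕ) : A :=
  ∑ S ∈ Finset.powersetCard k (Finset.Icc (a + 1) b),
    if ∀ i ∈ S, i + 1 ∉ S then ∏ i ∈ S, R i else 0

/-- `Vp R g m a b = Σ_{k=1}^{m} g_k • Zw R a b (2k-1)`: grand-canonical generating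
function for walks of odd length from `a` to `b`. -/
def Vp (R : ℤ → A) (g : ℕ → A) (m : ℕ) (a b : ℤ) : A :=
  ∑ k ∈ Finset.Icc 1 m, g k * Zw R a b (2 * k - 1)

/-- The conserved quantities `Γ_{2i}(n)`; `Gam R g m i n` stands for `Γ_{2i}(n)`. -/
def Gam (R : ℤ → A) (g : ℕ → A) (m : ℕ) (i : ℕ) (n : ℤ) : A :=
  if i = 0 then R (n - 1) - Vp R g m (n - 1) (n - 2) + (if n = 0 then 1 else 0)
  else
    Zwp R (n - 1) (n - 1) (2 * i) *
        (R (n - 1) - Vp R g m (n - 1) (n - 2) + (if n = 0 then 1 else 0)) -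
      ∑ j ∈ Finset.Icc 1 i,
        Zwp R (n - 1) (n - 1 + 2 * (j : ℤ)) (2 * i) * Vp R g m (n + 2 * (j : ℤ) - 1) (n - 2)

/-- The symmetric conserved quantities `Γ̃_{2i}(n)`; `Gamt R g m i n` stands
for `Γ̃_{2i}(n)`. -/
def Gamt (R : ℤ → A) (g : ℕ → A) (m : ℕ) (i : ℕ) (n : ℤ) : A :=
  if i = 0 then R n - Vp R g m n (n - 1)
  else
    (Zw R n (n - 1) (2 * i - 1) - R (n - 1) * R (n + 1) * Zw R (n - 2) (n + 1) (2 * i - 1)) *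
        (R n - Vp R g m n (n - 1)) -
      ∑ j ∈ Finset.Icc 1 i,
        (Zw R (n - (j : ℤ)) (n + (j : ℤ) - 1) (2 * i - 1) -
            R (n - (j : ℤ) - 1) * R (n + (j : ℤ) + 1) *
              Zw R (n - (j : ℤ) - 2) (n + (j : ℤ) + 1) (2 * i - 1)) *
          Vp R g m (n + (j : ℤ)) (n - (j : ℤ) - 1)

/-- The master equation: `R i = 0` for `i < 0` and `R n = 1 + V'_{n,n-1}` for `n ≥ 0`. -/
def MasterEq (R : ℤ → A) (g : ℕ → A) (m : ℕ) : Prop :=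
  (∀ i : ℤ, i < 0 → R i = 0) ∧ ∀ n : ℤ, 0 ≤ n → R n = 1 + Vp R g m n (n - 1)

/-- `Zodd R a b i = Zw R a b (2i-1)`, with the convention that for `i = 0`
(walks of length `-1`) it equals `1` if `b = a - 1` and `0` otherwise. -/
def Zodd (R : ℤ → A) (a b : ℤ) (i : ℕ) : A :=
  if i = 0 then (if b = a - 1 then 1 else 0) else Zw R a b (2 * i - 1)

/-- Binomial coefficient with an integer lower index, with the convention that it
vanishes for negative lower index. -/
def Cz (n : ℕ) (p : ℤ) : ℤ := if 0 ≤ p then n.choose p.toNat else 0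

/-!
Inside the band `[n - j, n + j - 1]` of `2 j` heights, walks are generated by a tridiagonal
transfer matrix `T` (an up-step weighs `1`, a down-step from `h` weighs `R h`). Expanding along
the last site shows that the hard-dimer polynomials `∑ₚ (-1)ᵖ Π_{L, L+t-1}(p) x^(t-2p)` obey the
same three-term recursion as the rows of the powers of `T`, so they carry row `L` of `T^ℓ` to row
`L + t`; for `t = 2 j` this is the Cayley–Hamilton relation `P(T) = 0`. When `k < j` every walk in
the statement stays in the band, and splitting the even walks `n - k → n + k` at their last step
and `n - k - 1 → n + k + 1` at their first step writes the sum as a combination of two entries of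
`P(T)`. When `j ≤ k` the walks are too short, except the straight walk up when `j = k`.
-/

section Walks

variable (R : ℤ → A)

lemma Zw_zero (a b : ℤ) : Zw R a b 0 = if a = b then 1 else 0 := by
  simp [Zw, walkEnd, walkWeight]

lemma Zw_succ (a b : ℤ) (ℓ : ℕ) :
    Zw R a b (ℓ + 1) = Zw R (a + 1) b ℓ + R a * Zw R (a - 1) b ℓ := by
  rw [Zw, ← (Fin.consEquiv fun _ => Bool).sum_comp, Fintype.sum_prod_type, Fintype.sum_bool,
    Zw, Zw, mul_sum]
  simp [Fin.consEquiv, List.ofFn_succ, walkEnd, walkWeight, mul_ite]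

lemma Zw_eq_zero {a b : ℤ} {ℓ : ℕ} (h : ℓ < |b - a|) : Zw R a b ℓ = 0 := by
  induction ℓ generalizing a with
  | zero => rw [Zw_zero, if_neg (by rintro rfl; simp at h)]
  | succ ℓ ih =>
    rw [lt_abs] at h
    rw [Zw_succ, ih (by rw [lt_abs]; omega), ih (by rw [lt_abs]; omega), mul_zero, add_zero]

lemma Zw_self_add (a : ℤ) (ℓ : ℕ) : Zw R a (a + ℓ) ℓ = 1 := by
  induction ℓ generalizing a with
  | zero => simp [Zw_zero]
  | succ ℓ ih =>
    rw [Zw_succ, show a + (ℓ + 1 : ℕ) = a + 1 + ℓ by push_cast; ring, ih,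
      Zw_eq_zero R (by rw [lt_abs]; omega), mul_zero, add_zero]

lemma Zodd_eq_zero {a b : ℤ} {i : ℕ} (h : 2 * (i : ℤ) - 1 < b - a) : Zodd R a b i = 0 := by
  rcases i with _ | i
  · simp only [Zodd, if_true]
    exact if_neg (by omega)
  · rw [Zodd, if_neg i.succ_ne_zero, Zw_eq_zero R (by rw [lt_abs]; omega)]

lemma Zodd_self_add (a : ℤ) (i : ℕ) : Zodd R a (a + 2 * i - 1) i = 1 := by
  rcases i with _ | i
  · simp [Zodd]
  · have h : a + 2 * ((i + 1 : ℕ) : ℤ) - 1 = a + (2 * (i + 1) - 1 : ℕ) := by push_cast; omega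
    rw [Zodd, if_neg i.succ_ne_zero, h, Zw_self_add]

end Walks

section Band

variable (R : ℤ → A) (L U : ℤ)

/-- Walks confined to the heights `[L, U]`: the entries of the powers of the transfer matrix. -/
def Zband : ℤ → ℤ → ℕ → A
  | a, b, 0 => if a = b ∧ L ≤ a ∧ a ≤ U then 1 else 0
  | a, b, ℓ + 1 =>
    if L ≤ a ∧ a ≤ U then Zband (a + 1) b ℓ + R a * Zband (a - 1) b ℓ else 0

/-- Band analogue of `Zodd`, with the same convention for walks of length `-1`. -/
def ZbandOdd (a b : ℤ) : ℕ → A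
  | 0 => if b = a - 1 ∧ L ≤ a ∧ a ≤ U then 1 else 0
  | i + 1 => Zband R L U a b (2 * i + 1)

variable {R L U}

lemma Zband_succ {a : ℤ} (ha : L ≤ a ∧ a ≤ U) (b : ℤ) (ℓ : ℕ) :
    Zband R L U a b (ℓ + 1) = Zband R L U (a + 1) b ℓ + R a * Zband R L U (a - 1) b ℓ :=
  if_pos ha

lemma Zband_eq_zero_of_outside {a : ℤ} (ha : ¬(L ≤ a ∧ a ≤ U)) (b : ℤ) (ℓ : ℕ) :
    Zband R L U a b ℓ = 0 := by
  cases ℓ <;> simp only [Zband] <;> grind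

lemma Zband_succ_right (a : ℤ) {b : ℤ} (hb : L ≤ b ∧ b ≤ U) (ℓ : ℕ) :
    Zband R L U a b (ℓ + 1) =
      Zband R L U a (b - 1) ℓ + R (b + 1) * Zband R L U a (b + 1) ℓ := by
  induction ℓ generalizing a with
  | zero =>
    by_cases ha : L ≤ a ∧ a ≤ U
    · simp only [Zband]
      split_ifs <;> first | omega | simp_all
    · simp [Zband_eq_zero_of_outside ha]
  | succ ℓ ih =>
    by_cases ha : L ≤ a ∧ a ≤ U
    · rw [Zband_succ ha, Zband_succ ha, Zband_succ ha, ih, ih]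
      ring
    · simp [Zband_eq_zero_of_outside ha]

lemma Zband_eq_Zw {a b : ℤ} {ℓ : ℕ} (hL : 2 * L ≤ a + b - ℓ) (hU : a + b + ℓ ≤ 2 * U) :
    Zband R L U a b ℓ = Zw R a b ℓ := by
  induction ℓ generalizing a with
  | zero =>
    rw [Zw_zero]
    simp only [Zband]
    split_ifs <;> first | rfl | omega
  | succ ℓ ih =>
    by_cases ha : L ≤ a ∧ a ≤ U
    · push_cast at hL hU
      rw [Zband_succ ha, Zw_succ, ih (by omega) (by omega), ih (by omega) (by omega)]
    · rw [Zband_eq_zero_of_outside ha, Zw_eq_zero R (by rw [lt_abs]; omega)]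

lemma ZbandOdd_eq_Zodd {a b : ℤ} {i : ℕ} (h0 : b = a - 1 → L ≤ a ∧ a ≤ U)
    (hL : 2 * L ≤ a + b - (2 * i - 1)) (hU : a + b + (2 * i - 1) ≤ 2 * U) :
    ZbandOdd R L U a b i = Zodd R a b i := by
  rcases i with _ | i
  · simp only [ZbandOdd, Zodd, if_true]
    by_cases hb : b = a - 1 <;> simp [hb, h0]
  · rw [ZbandOdd, Zodd, if_neg i.succ_ne_zero, show 2 * (i + 1) - 1 = 2 * i + 1 by omega,
      Zband_eq_Zw] <;> push_cast at hL hU ⊢ <;> omega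

lemma Zband_two_mul {a b : ℤ} (ha : L ≤ a ∧ a ≤ U) (hab : a < b) (i : ℕ) :
    Zband R L U a b (2 * i) =
      ZbandOdd R L U (a + 1) b i + R a * ZbandOdd R L U (a - 1) b i := by
  rcases i with _ | i
  · simp only [ZbandOdd, Zband]
    split_ifs <;> first | omega | simp_all
  · rw [show 2 * (i + 1) = 2 * i + 1 + 1 by ring, Zband_succ ha]
    rfl

lemma Zband_two_mul_right {a b : ℤ} (hb : L ≤ b ∧ b ≤ U) (hab : a ≤ b) (i : ℕ) :
    Zband R L U a b (2 * i) =
      ZbandOdd R L U a (b - 1) i + R (b + 1) * ZbandOdd R L U a (b + 1) i := by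
  rcases i with _ | i
  · simp only [ZbandOdd, Zband]
    split_ifs <;> first | omega | simp_all
  · rw [show 2 * (i + 1) = 2 * i + 1 + 1 by ring, Zband_succ_right a hb]
    rfl

end Band

section Dimers

variable (R : ℤ → A)

lemma Pdim_zero (a b : ℤ) : Pdim R a b 0 = 1 := by
  simp [Pdim]

lemma Pdim_eq_zero {a b : ℤ} {m : ℕ} (hm : 0 < m) (h : b - a + 1 < 2 * m) :
    Pdim R a b m = 0 := by
  -- `S` and `S - 1` would be disjoint subsets of `[a, b]` with `m` elements each.
  refine sum_eq_zero fun S hS => if_neg fun hS' => ?_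
  rw [mem_powersetCard] at hS
  have hdisj : Disjoint S (S.image (· - 1)) := by
    refine disjoint_left.mpr fun x hx hx' => ?_
    obtain ⟨y, hy, rfl⟩ := mem_image.mp hx'
    exact hS' _ hx (by simpa using hy)
  have hsub : S ∪ S.image (· - 1) ⊆ Icc a b := by
    intro x hx
    rcases mem_union.mp hx with hx | hx
    · have := mem_Icc.mp (hS.1 hx)
      exact mem_Icc.mpr (by omega)
    · obtain ⟨y, hy, rfl⟩ := mem_image.mp hx
      have := mem_Icc.mp (hS.1 hy)
      exact mem_Icc.mpr (by omega)
  have hcard := card_le_card hsub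
  rw [card_union_of_disjoint hdisj, card_image_of_injective _ sub_left_injective, hS.2,
    Int.card_Icc] at hcard
  omega

lemma noConsec_insert_iff {S : Finset ℤ} {x : ℤ} (hx : x + 1 ∉ S) :
    (∀ i ∈ insert x S, i + 1 ∉ insert x S) ↔ (∀ i ∈ S, i + 1 ∉ S) ∧ x - 1 ∉ S := by
  simp only [mem_insert]
  grind

lemma Pdim_succ_right {a b : ℤ} (hab : a ≤ b) (m : ℕ) :
    Pdim R a (b + 1) (m + 1) = Pdim R a b (m + 1) + R (b + 1) * Pdim R a (b - 1) m := by
  have hIcc : Icc (a + 1) (b + 1) = insert (b + 1) (Icc (a + 1) b) := by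
    ext x; simp only [mem_Icc, mem_insert]; omega
  have hb : b + 1 ∉ Icc (a + 1) b := by simp
  have hdisj : Disjoint (powersetCard (m + 1) (Icc (a + 1) b))
      ((powersetCard m (Icc (a + 1) b)).image (insert (b + 1))) := by
    refine disjoint_left.mpr fun S hS hS' => ?_
    obtain ⟨T, -, rfl⟩ := mem_image.mp hS'
    exact hb ((mem_powersetCard.mp hS).1 (mem_insert_self _ _))
  have hinj : Set.InjOn (insert (b + 1)) (powersetCard m (Icc (a + 1) b) : Set (Finset ℤ)) :=
    fun S hS T hT hST => by
      have hS' : b + 1 ∉ S := fun h => hb ((mem_powersetCard.mp hS).1 h)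
      have hT' : b + 1 ∉ T := fun h => hb ((mem_powersetCard.mp hT).1 h)
      rw [← erase_insert hS', hST, erase_insert hT']
  have hprev : powersetCard m (Icc (a + 1) (b - 1)) =
      (powersetCard m (Icc (a + 1) b)).filter (b ∉ ·) := by
    ext S; simp only [mem_powersetCard, mem_filter, subset_iff, mem_Icc]; grind
  rw [Pdim, hIcc, powersetCard_succ_insert hb, sum_union hdisj, sum_image hinj, Pdim, Pdim,
    hprev, sum_filter, mul_sum]
  congr 1
  refine sum_congr rfl fun S hS => ?_
  have hS := mem_powersetCard.mp hS
  have hb1 : b + 1 ∉ S := fun h => hb (hS.1 h)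
  have hb2 : b + 1 + 1 ∉ S := fun h => by have := mem_Icc.mp (hS.1 h); omega
  simp only [noConsec_insert_iff hb2, prod_insert hb1, add_sub_cancel_right]
  by_cases hbS : b ∈ S <;> simp [hbS, mul_ite]

end Dimers

section Transfer

variable (R : ℤ → A)

lemma sum_Pdim_mul_eq_of_rec {f : ℤ → ℕ → A} {L : ℤ} {t : ℕ}
    (hrec : ∀ a, L ≤ a → a < L + t → ∀ ℓ, f a (ℓ + 1) = f (a + 1) ℓ + R a * f (a - 1) ℓ)
    (hbot : ∀ ℓ, f (L - 1) ℓ = 0) (ℓ : ℕ) :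
    ∑ p ∈ range (t + 1), (-1) ^ p * Pdim R L (L + t - 1) p * f L (ℓ + t - 2 * p) =
      f (L + t) ℓ := by
  induction t using Nat.twoStepInduction generalizing ℓ with
  | zero => simp [Pdim_zero]
  | one =>
    have h := hrec L le_rfl (by omega) ℓ
    rw [hbot, mul_zero, add_zero] at h
    rw [sum_range_succ, sum_range_one, Pdim_eq_zero R one_pos (by push_cast; omega)]
    simpa [Pdim_zero] using h
  | more t ih₀ ih₁ =>
    push_cast at ih₁ hrec ⊢
    have hprev : ∑ q ∈ range (t + 2), (-1) ^ q * Pdim R L (L + t - 1) q * f L (ℓ + t - 2 * q) =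
        f (L + t) ℓ := by
      rw [sum_range_succ, Pdim_eq_zero R (m := t + 1) (by omega) (by omega), mul_zero, zero_mul,
        add_zero, ih₀ (fun a h₁ h₂ => hrec a h₁ (by omega))]
    have hlast : ∑ q ∈ range (t + 2),
          (-1) ^ (q + 1) * Pdim R L (L + t) (q + 1) * f L (ℓ + t - 2 * q) + f L (ℓ + t + 2) =
        f (L + (t + 1)) (ℓ + 1) := by
      have h := ih₁ (fun a h₁ h₂ => hrec a h₁ (by omega)) (ℓ + 1)
      rw [sum_range_succ', show L + (t + 1) - 1 = L + t by ring, Pdim_zero] at h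
      rw [sum_range_succ, Pdim_eq_zero R (m := t + 1 + 1) (by omega) (by omega), ← h]
      simp only [mul_zero, zero_mul, add_zero, pow_zero, one_mul]
      congr 1
      · exact sum_congr rfl fun q _ => by congr 2; omega
      · congr 1; omega
    have hstep := hrec (L + (t + 1)) (by omega) (by omega) ℓ
    rw [show L + (t + 1) + 1 = L + (t + 2) by ring, show L + (t + 1) - 1 = L + t by ring] at hstep
    calc ∑ p ∈ range (t + 2 + 1),
          (-1) ^ p * Pdim R L (L + (t + 2) - 1) p * f L (ℓ + (t + 2) - 2 * p)
        = ∑ q ∈ range (t + 2), ((-1) ^ (q + 1) * Pdim R L (L + t) (q + 1) * f L (ℓ + t - 2 * q)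
            - R (L + (t + 1)) * ((-1) ^ q * Pdim R L (L + t - 1) q * f L (ℓ + t - 2 * q)))
          + f L (ℓ + t + 2) := by
          rw [sum_range_succ', Pdim_zero, pow_zero, one_mul, one_mul, Nat.mul_zero, Nat.sub_zero,
            show ℓ + (t + 2) = ℓ + t + 2 by ring]
          refine congrArg (· + _) (sum_congr rfl fun q _ => ?_)
          rw [show L + (t + 2) - 1 = L + t + 1 by ring, Pdim_succ_right R (by omega),
            show ℓ + t + 2 - 2 * (q + 1) = ℓ + t - 2 * q by omega,
            show L + t + 1 = L + (t + 1) by ring]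
          ring
      _ = f (L + (t + 1)) (ℓ + 1) - R (L + (t + 1)) * f (L + t) ℓ := by
          rw [sum_sub_distrib, ← mul_sum, hprev, ← hlast]
          ring
      _ = f (L + (t + 2)) ℓ := by
          rw [hstep]
          ring

end Transfer

section CayleyHamilton

variable {R : ℤ → A} {L U : ℤ}

lemma sum_Pdim_mul_Zband_eq {t : ℕ} (ht : L + t ≤ U + 1) (y : ℤ) (ℓ : ℕ) :
    ∑ p ∈ range (t + 1), (-1) ^ p * Pdim R L (L + t - 1) p * Zband R L U L y (ℓ + t - 2 * p) =
      Zband R L U (L + t) y ℓ :=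
  sum_Pdim_mul_eq_of_rec R (f := fun a ℓ => Zband R L U a y ℓ)
    (fun a h₁ h₂ => Zband_succ (by omega) y) (fun ℓ => Zband_eq_zero_of_outside (by omega) y ℓ) ℓ

/-- Cayley–Hamilton for the transfer matrix of the band `[L, U]` with `N` sites. -/
lemma sum_Pdim_mul_Zband_eq_zero {N : ℕ} (hU : U = L + N - 1) (x y : ℤ) (ℓ : ℕ) :
    ∑ p ∈ range (N + 1), (-1) ^ p * Pdim R L U p * Zband R L U x y (ℓ + N - 2 * p) = 0 := by
  -- `g` solves the transfer recursion and vanishes on the rows `L - 1` and `L`.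
  set g : ℤ → ℕ → A := fun a ℓ =>
    ∑ p ∈ range (N + 1), (-1) ^ p * Pdim R L U p * Zband R L U a y (ℓ + N - 2 * p) with hg
  have hrec : ∀ a, L ≤ a → a ≤ U → ∀ ℓ, g a (ℓ + 1) = g (a + 1) ℓ + R a * g (a - 1) ℓ := by
    intro a h₁ h₂ ℓ
    simp only [hg, mul_sum, ← sum_add_distrib]
    refine sum_congr rfl fun p _ => ?_
    by_cases hp : 2 * p ≤ N
    · rw [show ℓ + 1 + N - 2 * p = ℓ + N - 2 * p + 1 by omega, Zband_succ ⟨h₁, h₂⟩]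
      ring
    · rw [Pdim_eq_zero R (by omega) (by omega)]
      ring
  have hbot : ∀ ℓ, g (L - 1) ℓ = 0 := fun ℓ =>
    sum_eq_zero fun p _ => by rw [Zband_eq_zero_of_outside (a := L - 1) (by omega), mul_zero]
  have hfirst : ∀ ℓ, g L ℓ = 0 := fun ℓ => by
    have h := sum_Pdim_mul_Zband_eq (R := R) (L := L) (U := U) (t := N) (by omega) y ℓ
    rw [← hU] at h
    rw [show g L ℓ = _ from h, Zband_eq_zero_of_outside (by omega)]
  by_cases hx : L ≤ x ∧ x ≤ U
  · obtain ⟨t, rfl⟩ : ∃ t : ℕ, x = L + t := ⟨(x - L).toNat, by omega⟩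
    change g (L + t) ℓ = 0
    rw [← sum_Pdim_mul_eq_of_rec R (fun a h₁ h₂ => hrec a h₁ (by omega)) hbot]
    simp [hfirst]
  · exact sum_eq_zero fun p _ => by rw [Zband_eq_zero_of_outside hx, mul_zero]

lemma sum_Pdim_mul_Zband_two_mul_eq_zero {j : ℕ} (hU : U = L + 2 * j - 1) (x y : ℤ) :
    ∑ i ∈ range (j + 1), (-1) ^ (j - i) * Pdim R L U (j - i) * Zband R L U x y (2 * i) = 0 := by
  have h := sum_Pdim_mul_Zband_eq_zero (R := R) (N := 2 * j) (by push_cast; omega) x y 0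
  rw [← sum_subset (range_subset_range.mpr (by omega : j + 1 ≤ 2 * j + 1))
    fun p _ hp => by rw [Pdim_eq_zero R (by simp at hp; omega) (by simp at hp; omega)]; ring,
    ← sum_range_reflect] at h
  rw [← h]
  refine sum_congr rfl fun i hi => ?_
  rw [mem_range] at hi
  rw [show j + 1 - 1 - i = j - i by omega, show 0 + 2 * j - 2 * (j - i) = 2 * i by omega]

end CayleyHamilton

section Inversion

variable (R : ℤ → A) (n : ℤ)

lemma Zodd_sub_eq_ite {i k : ℕ} (hik : i ≤ k) :
    Zodd R (n - k) (n + k - 1) i -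
        R (n - k - 1) * R (n + k + 1) * Zodd R (n - k - 2) (n + k + 1) i =
      if i = k then 1 else 0 := by
  rw [Zodd_eq_zero R (a := n - k - 2) (b := n + k + 1) (by omega), mul_zero, sub_zero]
  split_ifs with h
  · subst h
    simpa [show n + i - 1 = n - i + 2 * i - 1 by ring] using Zodd_self_add R (n - i) i
  · exact Zodd_eq_zero R (by omega)

lemma sum_Pdim_mul_Zodd_sub_of_le {j k : ℕ} (hjk : j ≤ k) :
    ∑ i ∈ range (j + 1), (-1) ^ (j - i) * Pdim R (n - j) (n + j - 1) (j - i) *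
        (Zodd R (n - k) (n + k - 1) i -
          R (n - k - 1) * R (n + k + 1) * Zodd R (n - k - 2) (n + k + 1) i) =
      if j = k then 1 else 0 := by
  rw [sum_congr rfl fun i hi => by rw [Zodd_sub_eq_ite R n (by simp at hi; omega)]]
  simp only [mul_ite, mul_one, mul_zero, sum_ite_eq', mem_range]
  by_cases h : j = k
  · subst h
    simp [Pdim_zero]
  · rw [if_neg (by omega), if_neg h]

lemma sum_Pdim_mul_Zodd_sub_of_lt {j k : ℕ} (hkj : k < j) :
    ∑ i ∈ range (j + 1), (-1) ^ (j - i) * Pdim R (n - j) (n + j - 1) (j - i) *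
        (Zodd R (n - k) (n + k - 1) i -
          R (n - k - 1) * R (n + k + 1) * Zodd R (n - k - 2) (n + k + 1) i) = 0 := by
  have hU : n + j - 1 = n - j + 2 * j - 1 := by ring
  calc _ = ∑ i ∈ range (j + 1), (-1) ^ (j - i) * Pdim R (n - j) (n + j - 1) (j - i) *
            Zband R (n - j) (n + j - 1) (n - k) (n + k) (2 * i) -
          R (n + k + 1) * ∑ i ∈ range (j + 1), (-1) ^ (j - i) *
            Pdim R (n - j) (n + j - 1) (j - i) *
              Zband R (n - j) (n + j - 1) (n - k - 1) (n + k + 1) (2 * i) := by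
        rw [mul_sum, ← sum_sub_distrib]
        refine sum_congr rfl fun i hi => ?_
        have hi : i ≤ j := by simp at hi; omega
        rw [Zband_two_mul_right (by omega) (by omega), Zband_two_mul (by omega) (by omega),
          show n - k - 1 + 1 = n - k by ring, show n - k - 1 - 1 = n - k - 2 by ring,
          ZbandOdd_eq_Zodd (a := n - k) (b := n + k - 1) (fun h => by omega) (by omega)
            (by omega),
          ZbandOdd_eq_Zodd (a := n - k - 2) (b := n + k + 1) (fun h => by omega) (by omega)
            (by omega)]
        ring
    _ = 0 := by
        rw [sum_Pdim_mul_Zband_two_mul_eq_zero hU, sum_Pdim_mul_Zband_two_mul_eq_zero hU]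
        ring

end Inversion

theorem stmt_19_general {A : Type*} [CommRing A] (R : ℤ → A) (n : ℤ) (j k : ℕ) :
    ∑ i ∈ Finset.range (j + 1),
        (-1 : A) ^ (j - i) * Pdim R (n - (j : ℤ)) (n + (j : ℤ) - 1) (j - i) *
          (Zodd R (n - (k : ℤ)) (n + (k : ℤ) - 1) i -
            R (n - (k : ℤ) - 1) * R (n + (k : ℤ) + 1) *
              Zodd R (n - (k : ℤ) - 2) (n + (k : ℤ) + 1) i) =
      if j = k then 1 else 0 := by
  rcases le_or_gt j k with hjk | hkj
  · exact sum_Pdim_mul_Zodd_sub_of_le R n hjk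
  · rw [if_neg hkj.ne']
    exact sum_Pdim_mul_Zodd_sub_of_lt R n hkj

/-- the inversion relation of Appendix B, Eq. (B.2). The convention
`Z_{a,b}(-1) = 1` if `b = a-1` and `0` otherwise is implemented by `Zodd`. -/
theorem stmt_19 {A : Type*} [CommRing A] (R : ℤ → A) (n : ℤ) (j k : ℕ) (hj : 1 ≤ j) :
    ∑ i ∈ Finset.range (j + 1),
        (-1 : A) ^ (j - i) * Pdim R (n - (j : ℤ)) (n + (j : ℤ) - 1) (j - i) *
          (Zodd R (n - (k : ℤ)) (n + (k : ℤ) - 1) i -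
            R (n - (k : ℤ) - 1) * R (n + (k : ℤ) + 1) *
              Zodd R (n - (k : ℤ) - 2) (n + (k : ℤ) + 1) i) =
      if j = k then 1 else 0 :=
  stmt_19_general R n j k
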